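/- Corollary 5 key estimate: Let S = {0,1}, Q_0 a probability on S^∞ under which the sequence is exchangeable with V = μ{1} = a.s. limit of μ_n{1}, V_n = E_{Q_0}(V|G_n). If h: (0,1) → ℝ is Lipschitz with constant d and f = h(V) is a density of P with respect to Q_0, then E_{Q_0}(f²) − E_{Q_0}(E_{Q_0}(f|G_n)²) ≤ (16 d²/n) E_{Q_0}(‖W_n‖²), where ‖W_n‖ = sup_B |W_n(B)| over the power set of S and √n|V − V_n| ≤ ‖C_n^{Q_0}‖ + ‖W_n‖. -/

import Mathlib

open MeasureTheory Filter Set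

/-- The σ-field generated by the first `n` coordinates. -/
noncomputable def cylG (S : Type*) [MeasurableSpace S] (n : ℕ) : MeasurableSpace (ℕ → S) :=
  MeasurableSpace.comap (fun ω (i : Fin n) => ω i) inferInstance

/-- Empirical frequency of `B` among the first `n` observations. -/
noncomputable def empMeas {S : Type*} (n : ℕ) (B : Set S) (ω : ℕ → S) : ℝ :=
  (n : ℝ)⁻¹ * ∑ i ∈ Finset.range n, B.indicator (fun _ => (1 : ℝ)) (ω i)

/-- The predictive probability `a_n(B) = P(X_{n+1} ∈ B ∣ G_n)` (0-indexed). -/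
noncomputable def predProb {S : Type*} [MeasurableSpace S] (P : Measure (ℕ → S))
    (n : ℕ) (B : Set S) : (ℕ → S) → ℝ :=
  P[fun ω => B.indicator (fun _ => (1 : ℝ)) (ω n) | cylG S n]

/-- The coordinate sequence is conditionally identically distributed under `P`. -/
def CID {S : Type*} [MeasurableSpace S] (P : Measure (ℕ → S)) : Prop :=
  ∀ B : Set S, MeasurableSet B → ∀ n k : ℕ, n < k →
    (P[fun ω => B.indicator (fun _ => (1 : ℝ)) (ω k) | cylG S n])
      =ᵐ[P] P[fun ω => B.indicator (fun _ => (1 : ℝ)) (ω n) | cylG S n]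

/-- `W_n(B) = √n (μ_n(B) - μ(B))`, given the limit random measure `μ` (as `μlim`). -/
noncomputable def Wn {S : Type*} (μlim : Set S → (ℕ → S) → ℝ) (n : ℕ) (B : Set S)
    (ω : ℕ → S) : ℝ :=
  Real.sqrt n * (empMeas n B ω - μlim B ω)

/-- `D` is countably determined: some countable `D₀ ⊆ D` realizes the same sup-distance
between any two probability laws on `S`. -/
def CountablyDetermined {S : Type*} [MeasurableSpace S] (D : Set (Set S)) : Prop :=
  (∀ B ∈ D, MeasurableSet B) ∧
  ∃ D0 ⊆ D, D0.Countable ∧ ∀ ν1 ν2 : Measure S, IsProbabilityMeasure ν1 →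
    IsProbabilityMeasure ν2 →
    (⨆ B : D0, |(ν1 B).toReal - (ν2 B).toReal|) = ⨆ B : D, |(ν1 B).toReal - (ν2 B).toReal|

/-!
`μ[· | m]` is the orthogonal projection of `L²(μ)` onto the `m`-measurable functions, so
`∫ f² - ∫ μ[f | m]² = ∫ (f - μ[f | m])²` is the squared distance from `f` to that subspace and is
bounded by `∫ (f - Y)²` for every `m`-measurable `Y`. For `f = h(V)` take `Y = h(V_n)`: the
Lipschitz bound gives at most `d² ∫ (V - V_n)²`. Applying the same principle to `V` with the
`G_n`-measurable empirical frequency `Y = μ_n{1}` gives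
`∫ (V - V_n)² ≤ ∫ (V - μ_n{1})² = ∫ W_n{1}² / n ≤ ∫ ‖W_n‖² / n`.
-/

section ConditionalExpectationL2

variable {Ω : Type*} {m m₀ : MeasurableSpace Ω} {μ : Measure Ω} [IsFiniteMeasure μ]
  {f Y : Ω → ℝ}

lemma integral_mul_sub_condExp_eq_zero (hm : m ≤ m₀) (hf : MemLp f 2 μ)
    (hYm : StronglyMeasurable[m] Y) (hY : MemLp Y 2 μ) :
    ∫ ω, Y ω * (f ω - μ[f | m] ω) ∂μ = 0 := by
  have hYf : Integrable (Y * f) μ := hY.integrable_mul hf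
  have hYg : Integrable (Y * μ[f | m]) μ := hY.integrable_mul (hf.condExp one_le_two)
  have hpull : ∫ ω, (Y * f) ω ∂μ = ∫ ω, (Y * μ[f | m]) ω ∂μ := by
    rw [← integral_condExp hm]
    exact integral_congr_ae
      (condExp_mul_of_stronglyMeasurable_left hYm hYf (hf.integrable one_le_two))
  calc ∫ ω, Y ω * (f ω - μ[f | m] ω) ∂μ = ∫ ω, ((Y * f) ω - (Y * μ[f | m]) ω) ∂μ := by
        simp only [Pi.mul_apply, mul_sub]
    _ = 0 := by rw [integral_sub hYf hYg, hpull, sub_self]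

lemma integral_sq_sub_eq_integral_sq_sub_condExp_add (hm : m ≤ m₀) (hf : MemLp f 2 μ)
    (hYm : StronglyMeasurable[m] Y) (hY : MemLp Y 2 μ) :
    ∫ ω, (f ω - Y ω) ^ 2 ∂μ
      = ∫ ω, (f ω - μ[f | m] ω) ^ 2 ∂μ + ∫ ω, (μ[f | m] ω - Y ω) ^ 2 ∂μ := by
  set g := μ[f | m]
  have hg : MemLp g 2 μ := hf.condExp one_le_two
  have hgY : MemLp (g - Y) 2 μ := hg.sub hY
  have horth : ∫ ω, (g - Y) ω * (f ω - g ω) ∂μ = 0 :=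
    integral_mul_sub_condExp_eq_zero hm hf (stronglyMeasurable_condExp.sub hYm) hgY
  have hcross : Integrable (fun ω => 2 * ((g - Y) ω * (f ω - g ω))) μ :=
    (hgY.integrable_mul (hf.sub hg)).const_mul 2
  have hfg : Integrable (fun ω => (f ω - g ω) ^ 2) μ := (hf.sub hg).integrable_sq
  have hgY2 : Integrable (fun ω => (g ω - Y ω) ^ 2) μ := hgY.integrable_sq
  have hsum : Integrable (fun ω => (f ω - g ω) ^ 2 + (g ω - Y ω) ^ 2) μ := hfg.add hgY2
  calc ∫ ω, (f ω - Y ω) ^ 2 ∂μ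
      = ∫ ω, ((f ω - g ω) ^ 2 + (g ω - Y ω) ^ 2 + 2 * ((g - Y) ω * (f ω - g ω))) ∂μ := by
        congr 1; ext ω; simp only [Pi.sub_apply]; ring
    _ = _ := by
        rw [integral_add hsum hcross, integral_add hfg hgY2, integral_const_mul, horth,
          mul_zero, add_zero]

lemma integral_sq_sub_condExp_le (hm : m ≤ m₀) (hf : MemLp f 2 μ)
    (hYm : StronglyMeasurable[m] Y) (hY : MemLp Y 2 μ) :
    ∫ ω, (f ω - μ[f | m] ω) ^ 2 ∂μ ≤ ∫ ω, (f ω - Y ω) ^ 2 ∂μ := by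
  rw [integral_sq_sub_eq_integral_sq_sub_condExp_add hm hf hYm hY]
  exact le_add_of_nonneg_right (integral_nonneg fun ω => sq_nonneg _)

lemma integral_sq_sub_integral_condExp_sq (hm : m ≤ m₀) (hf : MemLp f 2 μ) :
    ∫ ω, f ω ^ 2 ∂μ - ∫ ω, μ[f | m] ω ^ 2 ∂μ = ∫ ω, (f ω - μ[f | m] ω) ^ 2 ∂μ := by
  have := integral_sq_sub_eq_integral_sq_sub_condExp_add hm hf
    (stronglyMeasurable_const (b := 0)) (memLp_const 0)
  simp only [sub_zero] at this
  linarith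

lemma LipschitzWith.memLp_comp {p : ENNReal} {K : NNReal} {h : ℝ → ℝ} (hh : LipschitzWith K h)
    (hf : MemLp f p μ) : MemLp (fun ω => h (f ω)) p μ := by
  have hh₀ : LipschitzWith (K + 0) fun x => h x - h 0 := hh.sub (LipschitzWith.const (h 0))
  convert (hh₀.comp_memLp (sub_self _) hf).add (memLp_const (h 0)) using 1
  ext ω
  simp

lemma LipschitzWith.integral_sq_comp_sub_condExp_le (hm : m ≤ m₀) {K : NNReal} {h : ℝ → ℝ}
    (hh : LipschitzWith K h) (hf : MemLp f 2 μ) :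
    ∫ ω, (h (f ω) - μ[fun ω => h (f ω) | m] ω) ^ 2 ∂μ
      ≤ (K : ℝ) ^ 2 * ∫ ω, (f ω - μ[f | m] ω) ^ 2 ∂μ := by
  have hg : MemLp (μ[f | m]) 2 μ := hf.condExp one_le_two
  calc ∫ ω, (h (f ω) - μ[fun ω => h (f ω) | m] ω) ^ 2 ∂μ
      ≤ ∫ ω, (h (f ω) - h (μ[f | m] ω)) ^ 2 ∂μ :=
        integral_sq_sub_condExp_le hm (hh.memLp_comp hf)
          (hh.continuous.comp_stronglyMeasurable stronglyMeasurable_condExp) (hh.memLp_comp hg)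
    _ ≤ ∫ ω, (K : ℝ) ^ 2 * (f ω - μ[f | m] ω) ^ 2 ∂μ := by
        refine integral_mono ((hh.memLp_comp hf).sub (hh.memLp_comp hg)).integrable_sq
          ((hf.sub hg).integrable_sq.const_mul _) fun ω => ?_
        have := hh.dist_le_mul (f ω) (μ[f | m] ω)
        rw [Real.dist_eq, Real.dist_eq] at this
        calc (h (f ω) - h (μ[f | m] ω)) ^ 2
            = |h (f ω) - h (μ[f | m] ω)| ^ 2 := (sq_abs _).symm
          _ ≤ ((K : ℝ) * |f ω - μ[f | m] ω|) ^ 2 := pow_le_pow_left₀ (abs_nonneg _) this 2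
          _ = (K : ℝ) ^ 2 * (f ω - μ[f | m] ω) ^ 2 := by rw [mul_pow, sq_abs]
    _ = (K : ℝ) ^ 2 * ∫ ω, (f ω - μ[f | m] ω) ^ 2 ∂μ := integral_const_mul _ _

end ConditionalExpectationL2

section EmpiricalMeasure

variable {S : Type*}

lemma cylG_le [MeasurableSpace S] (n : ℕ) :
    cylG S n ≤ (inferInstance : MeasurableSpace (ℕ → S)) :=
  measurable_iff_comap_le.mp (measurable_pi_lambda _ fun _ => measurable_pi_apply _)

lemma measurable_cylG_apply [MeasurableSpace S] {n i : ℕ} (hi : i < n) :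
    Measurable[cylG S n] fun ω : ℕ → S => ω i :=
  have hproj : Measurable[cylG S n] fun (ω : ℕ → S) (j : Fin n) => ω j :=
    measurable_iff_comap_le.mpr le_rfl
  (measurable_pi_apply (⟨i, hi⟩ : Fin n)).comp hproj

lemma stronglyMeasurable_empMeas [MeasurableSpace S] (n : ℕ) {B : Set S} (hB : MeasurableSet B) :
    StronglyMeasurable[cylG S n] (empMeas n B) := by
  refine (measurable_const.mul (Finset.measurable_sum _ fun _ hi => ?_)).stronglyMeasurable
  exact (measurable_const.indicator hB).comp (measurable_cylG_apply (Finset.mem_range.mp hi))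

lemma empMeas_mem_Icc (n : ℕ) (B : Set S) (ω : ℕ → S) : empMeas n B ω ∈ Icc (0 : ℝ) 1 := by
  have hind : ∀ x : S, B.indicator (fun _ => (1 : ℝ)) x ∈ Icc (0 : ℝ) 1 := fun x => by
    by_cases hx : x ∈ B <;> simp [hx]
  have hsum : ∑ i ∈ Finset.range n, B.indicator (fun _ => (1 : ℝ)) (ω i) ≤ n := by
    simpa using Finset.sum_le_sum fun i (_ : i ∈ Finset.range n) => (hind (ω i)).2
  refine ⟨mul_nonneg (by positivity) (Finset.sum_nonneg fun i _ => (hind (ω i)).1), ?_⟩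
  rcases Nat.eq_zero_or_pos n with rfl | hn
  · simp [empMeas]
  · calc empMeas n B ω ≤ (n : ℝ)⁻¹ * n := mul_le_mul_of_nonneg_left hsum (by positivity)
      _ = 1 := inv_mul_cancel₀ (by positivity)

lemma memLp_empMeas [MeasurableSpace S] {μ : Measure (ℕ → S)} [IsFiniteMeasure μ] {p : ENNReal}
    (n : ℕ) {B : Set S} (hB : MeasurableSet B) : MemLp (empMeas n B) p μ :=
  MemLp.of_bound ((stronglyMeasurable_empMeas n hB).mono (cylG_le n)).aestronglyMeasurable 1
    (Eventually.of_forall fun ω => by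
      have := empMeas_mem_Icc n B ω
      exact abs_le.mpr ⟨by linarith [this.1], this.2⟩)

lemma mem_Icc_of_tendsto_empMeas {B : Set S} {ω : ℕ → S} {x : ℝ}
    (hx : Tendsto (fun n => empMeas n B ω) atTop (nhds x)) : x ∈ Icc (0 : ℝ) 1 :=
  isClosed_Icc.mem_of_tendsto hx (Eventually.of_forall fun n => empMeas_mem_Icc n B ω)

variable {μlim : Set S → (ℕ → S) → ℝ} {n : ℕ} {ω : ℕ → S}

lemma abs_Wn_le_sqrt {B : Set S} (hB : μlim B ω ∈ Icc (0 : ℝ) 1) :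
    |Wn μlim n B ω| ≤ Real.sqrt n := by
  have hemp := empMeas_mem_Icc n B ω
  have hdiff : |empMeas n B ω - μlim B ω| ≤ 1 :=
    abs_sub_le_iff.mpr ⟨by linarith [hemp.2, hB.1], by linarith [hemp.1, hB.2]⟩
  rw [Wn, abs_mul, abs_of_nonneg (Real.sqrt_nonneg _)]
  exact mul_le_of_le_one_right (Real.sqrt_nonneg _) hdiff

lemma memLp_of_ae_mem_Icc [MeasurableSpace S] {μ : Measure (ℕ → S)} [IsFiniteMeasure μ]
    {p : ENNReal} (hmeas : ∀ B, Measurable (μlim B))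
    (hbd : ∀ᵐ ω ∂μ, ∀ B, μlim B ω ∈ Icc (0 : ℝ) 1) (B : Set S) : MemLp (μlim B) p μ := by
  refine MemLp.of_bound (hmeas B).aestronglyMeasurable 1 ?_
  filter_upwards [hbd] with ω hω
  exact abs_le.mpr ⟨by linarith [(hω B).1], (hω B).2⟩

variable [Finite S]

lemma abs_Wn_le_iSup (B : Set S) : |Wn μlim n B ω| ≤ ⨆ B, |Wn μlim n B ω| :=
  le_ciSup (f := fun B => |Wn μlim n B ω|) (Set.finite_range _).bddAbove B

lemma sq_sub_empMeas_le (hn : n ≠ 0) (B : Set S) :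
    (μlim B ω - empMeas n B ω) ^ 2 ≤ (⨆ B, |Wn μlim n B ω|) ^ 2 / n := by
  have hn' : (0 : ℝ) < n := by positivity
  rw [le_div_iff₀ hn']
  calc (μlim B ω - empMeas n B ω) ^ 2 * n = Wn μlim n B ω ^ 2 := by
        rw [Wn, mul_pow, Real.sq_sqrt hn'.le]; ring
    _ = |Wn μlim n B ω| ^ 2 := (sq_abs _).symm
    _ ≤ (⨆ B, |Wn μlim n B ω|) ^ 2 := pow_le_pow_left₀ (abs_nonneg _) (abs_Wn_le_iSup B) 2

variable [MeasurableSpace S] [DiscreteMeasurableSpace S] {μ : Measure (ℕ → S)} [IsFiniteMeasure μ]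

lemma memLp_iSup_abs_Wn (hmeas : ∀ B, Measurable (μlim B))
    (hbd : ∀ᵐ ω ∂μ, ∀ B, μlim B ω ∈ Icc (0 : ℝ) 1) :
    MemLp (fun ω => ⨆ B, |Wn μlim n B ω|) 2 μ := by
  have hWn : ∀ B, Measurable (Wn μlim n B) := fun B =>
    measurable_const.mul
      (((stronglyMeasurable_empMeas n .of_discrete).mono (cylG_le n)).measurable.sub (hmeas B))
  refine MemLp.of_bound (Measurable.iSup fun B => (hWn B).abs).aestronglyMeasurable
    (Real.sqrt n) ?_
  filter_upwards [hbd] with ω hω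
  rw [Real.norm_eq_abs, abs_of_nonneg ((abs_nonneg _).trans (abs_Wn_le_iSup ∅))]
  exact ciSup_le fun B => abs_Wn_le_sqrt (hω B)

lemma integral_sq_sub_condExp_le_integral_iSup_abs_Wn (hn : n ≠ 0)
    (hmeas : ∀ B, Measurable (μlim B)) (hbd : ∀ᵐ ω ∂μ, ∀ B, μlim B ω ∈ Icc (0 : ℝ) 1)
    (B : Set S) :
    ∫ ω, (μlim B ω - μ[μlim B | cylG S n] ω) ^ 2 ∂μ
      ≤ (∫ ω, (⨆ B, |Wn μlim n B ω|) ^ 2 ∂μ) / n := by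
  have hV : MemLp (μlim B) 2 μ := memLp_of_ae_mem_Icc hmeas hbd B
  calc ∫ ω, (μlim B ω - μ[μlim B | cylG S n] ω) ^ 2 ∂μ
      ≤ ∫ ω, (μlim B ω - empMeas n B ω) ^ 2 ∂μ :=
        integral_sq_sub_condExp_le (cylG_le n) hV
          (stronglyMeasurable_empMeas n .of_discrete) (memLp_empMeas n .of_discrete)
    _ ≤ ∫ ω, (⨆ B, |Wn μlim n B ω|) ^ 2 / n ∂μ :=
        integral_mono (hV.sub (memLp_empMeas n .of_discrete)).integrable_sq
          ((memLp_iSup_abs_Wn hmeas hbd).integrable_sq.div_const _)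
          fun _ => sq_sub_empMeas_le hn B
    _ = (∫ ω, (⨆ B, |Wn μlim n B ω|) ^ 2 ∂μ) / n := integral_div _ _

end EmpiricalMeasure

/-- `S = {0,1}` is modelled as `Bool`, with `1 = true`. -/
theorem stmt12_general (Q0 : Measure (ℕ → Bool))
    [IsProbabilityMeasure Q0]
    (μlim : Set Bool → (ℕ → Bool) → ℝ) (hmeas : ∀ B, Measurable (μlim B))
    (hlim : ∀ B : Set Bool, ∀ᵐ ω ∂Q0,
      Tendsto (fun n => empMeas n B ω) atTop (nhds (μlim B ω)))
    -- `h` Lipschitz with constant `d`, and `f = h(V)` density of `P` w.r.t. `Q₀`,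
    -- where `V = μ{1}`:
    (d : ℝ) (h : ℝ → ℝ) (hLip : LipschitzWith d.toNNReal h) :
    ∀ n : ℕ, 1 ≤ n →
      (∫ ω, (h (μlim {true} ω)) ^ 2 ∂Q0)
        - ∫ ω, ((Q0[fun ω' => h (μlim {true} ω') | cylG Bool n]) ω) ^ 2 ∂Q0
      ≤ (16 * d ^ 2 / n) * ∫ ω, (⨆ B : Set Bool, |Wn μlim n B ω|) ^ 2 ∂Q0 := by
  intro n hn
  have hbd : ∀ᵐ ω ∂Q0, ∀ B, μlim B ω ∈ Icc (0 : ℝ) 1 :=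
    ae_all_iff.mpr fun B => (hlim B).mono fun _ => mem_Icc_of_tendsto_empMeas
  have hV : MemLp (μlim {true}) 2 Q0 := memLp_of_ae_mem_Icc hmeas hbd {true}
  have hK : (d.toNNReal : ℝ) ^ 2 ≤ 16 * d ^ 2 := by
    rw [Real.coe_toNNReal']
    rcases le_total d 0 with hd | hd
    · rw [max_eq_right hd]; nlinarith [sq_nonneg d]
    · rw [max_eq_left hd]; nlinarith
  calc (∫ ω, (h (μlim {true} ω)) ^ 2 ∂Q0)
        - ∫ ω, ((Q0[fun ω' => h (μlim {true} ω') | cylG Bool n]) ω) ^ 2 ∂Q0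
      = ∫ ω, (h (μlim {true} ω) - Q0[fun ω' => h (μlim {true} ω') | cylG Bool n] ω) ^ 2 ∂Q0 :=
        integral_sq_sub_integral_condExp_sq (cylG_le n) (hLip.memLp_comp hV)
    _ ≤ (d.toNNReal : ℝ) ^ 2 * ∫ ω, (μlim {true} ω - Q0[μlim {true} | cylG Bool n] ω) ^ 2 ∂Q0 :=
        hLip.integral_sq_comp_sub_condExp_le (cylG_le n) hV
    _ ≤ (d.toNNReal : ℝ) ^ 2 * ((∫ ω, (⨆ B : Set Bool, |Wn μlim n B ω|) ^ 2 ∂Q0) / n) := by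
        gcongr
        exact integral_sq_sub_condExp_le_integral_iSup_abs_Wn (by omega) hmeas hbd {true}
    _ ≤ 16 * d ^ 2 * ((∫ ω, (⨆ B : Set Bool, |Wn μlim n B ω|) ^ 2 ∂Q0) / n) :=
        mul_le_mul_of_nonneg_right hK
          (div_nonneg (integral_nonneg fun _ => sq_nonneg _) n.cast_nonneg)
    _ = (16 * d ^ 2 / n) * ∫ ω, (⨆ B : Set Bool, |Wn μlim n B ω|) ^ 2 ∂Q0 := by ring

/-- Corollary 5 key estimate, for `S = {0,1}` (modelled as `Bool`, with `1 = true`). -/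
theorem stmt12 (P Q0 : Measure (ℕ → Bool))
    [IsProbabilityMeasure P] [IsProbabilityMeasure Q0]
    -- exchangeability of the coordinate sequence under `Q₀`:
    (hexch : ∀ σ : Equiv.Perm ℕ, (∃ m, ∀ k ≥ m, σ k = k) →
      Q0.map (fun ω => ω ∘ σ) = Q0)
    (μlim : Set Bool → (ℕ → Bool) → ℝ) (hmeas : ∀ B, Measurable (μlim B))
    (hlim : ∀ B : Set Bool, ∀ᵐ ω ∂Q0,
      Tendsto (fun n => empMeas n B ω) atTop (nhds (μlim B ω)))
    -- `h` Lipschitz with constant `d`, and `f = h(V)` density of `P` w.r.t. `Q₀`,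
    -- where `V = μ{1}`:
    (d : ℝ) (hd : 0 ≤ d) (h : ℝ → ℝ) (hLip : LipschitzWith d.toNNReal h)
    (hPQ : P = Q0.withDensity (fun ω => ENNReal.ofReal (h (μlim {true} ω)))) :
    ∀ n : ℕ, 1 ≤ n →
      (∫ ω, (h (μlim {true} ω)) ^ 2 ∂Q0)
        - ∫ ω, ((Q0[fun ω' => h (μlim {true} ω') | cylG Bool n]) ω) ^ 2 ∂Q0
      ≤ (16 * d ^ 2 / n) * ∫ ω, (⨆ B : Set Bool, |Wn μlim n B ω|) ^ 2 ∂Q0 :=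
  stmt12_general Q0 μlim hmeas hlim d h hLip
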